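/- arXiv:1801.07022 — 7 statements merged into one kernel-verified Lean document; each statement's English description precedes it below -/
import Mathlib

section
/- Let λ : [0,∞) → ℝ be continuous with λ(t) ∈ [λ_min, λ_max] for all t, where 0 < λ_min ≤ λ_max. If ω solves the Riccati equation ω' = ω² − λ on [0,∞) and remains positive and finite at all times, then ω(t) ∈ [√λ_min, √λ_max] for all t > 0. -/
/-!
Both bounds follow from forward invariance of a level set. If `ω a < √λ_min`, then at the level
`ω a` the slope is at most `(ω a)² - λ_min < 0`, so `ω` never rises above `ω a` again; hence
`ω' ≤ (ω a)² - λ_min` from `a` on, and `ω` would turn negative in finite time. If `ω a > √λ_max`,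
then `ω` never drops below `ω a`, so `(1/ω)' = λ/ω² - 1 ≤ λ_max/(ω a)² - 1 < 0` and `1/ω` would
turn negative in finite time: `ω` blows up.
-/

theorem le_of_hasDerivAt_neg_at_level {f f' : ℝ → ℝ} {a M t : ℝ}
    (hf : ∀ s ≥ a, HasDerivAt f (f' s) s) (ha : f a ≤ M)
    (hM : ∀ s ≥ a, f s = M → f' s < 0) (ht : a ≤ t) : f t ≤ M :=
  image_le_of_deriv_right_lt_deriv_boundary (B := fun _ => M) (B' := 0)
    (fun s hs => (hf s hs.1).continuousAt.continuousWithinAt)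
    (fun s hs => (hf s hs.1).hasDerivWithinAt) ha (fun _ => hasDerivAt_const _ _)
    (fun s hs => hM s hs.1) ⟨ht, le_rfl⟩

theorem le_of_hasDerivAt_pos_at_level {f f' : ℝ → ℝ} {a M t : ℝ}
    (hf : ∀ s ≥ a, HasDerivAt f (f' s) s) (ha : M ≤ f a)
    (hM : ∀ s ≥ a, M = f s → 0 < f' s) (ht : a ≤ t) : M ≤ f t :=
  image_le_of_deriv_right_lt_deriv_boundary' (f := fun _ => M) (f' := 0)
    continuousOn_const (fun _ _ => hasDerivWithinAt_const _ _ _) ha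
    (fun s hs => (hf s hs.1).continuousAt.continuousWithinAt)
    (fun s hs => (hf s hs.1).hasDerivWithinAt) (fun s hs => hM s hs.1) ⟨ht, le_rfl⟩

theorem exists_lt_zero_of_hasDerivAt_le_neg {f f' : ℝ → ℝ} {a δ : ℝ} (hδ : 0 < δ)
    (hf : ∀ t ≥ a, HasDerivAt f (f' t) t) (hf' : ∀ t ≥ a, f' t ≤ -δ) : ∃ t ≥ a, f t < 0 := by
  set T := a + (|f a| + 1) / δ
  have haT : a ≤ T := le_add_of_nonneg_right (by positivity)
  have hline : ∀ s, HasDerivAt (fun s => f a - δ * (s - a)) (-δ) s := fun s => by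
    simpa using ((hasDerivAt_id s).sub_const a).const_mul δ |>.const_sub (f a)
  have hT : f T ≤ f a - δ * (T - a) :=
    image_le_of_deriv_right_le_deriv_boundary
      (fun s hs => (hf s hs.1).continuousAt.continuousWithinAt)
      (fun s hs => (hf s hs.1).hasDerivWithinAt) (by simp)
      (fun s _ => (hline s).continuousAt.continuousWithinAt)
      (fun s _ => (hline s).hasDerivWithinAt) (fun s hs => hf' s hs.1) ⟨haT, le_rfl⟩
  have hδT : δ * (T - a) = |f a| + 1 := by simp only [T]; field_simp; ring
  exact ⟨T, haT, by linarith [le_abs_self (f a)]⟩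

section Riccati

variable {lam ω : ℝ → ℝ} {a : ℝ}

theorem sqrt_le_of_riccati_of_forall_pos {lmin : ℝ}
    (hode : ∀ t ≥ a, HasDerivAt ω (ω t ^ 2 - lam t) t) (hpos : ∀ t ≥ a, 0 < ω t)
    (hlam : ∀ t ≥ a, lmin ≤ lam t) : √lmin ≤ ω a := by
  by_contra! h
  have hδ : 0 < lmin - ω a ^ 2 := sub_pos.2 ((Real.lt_sqrt (hpos a le_rfl).le).1 h)
  have hbelow : ∀ t ≥ a, ω t ≤ ω a := fun t =>
    le_of_hasDerivAt_neg_at_level hode le_rfl fun s hs hωs => by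
      rw [hωs]; linarith [hlam s hs]
  obtain ⟨t, ht, hneg⟩ := exists_lt_zero_of_hasDerivAt_le_neg hδ hode fun t ht => by
    nlinarith [hlam t ht, hbelow t ht, hpos t ht]
  exact (hpos t ht).not_gt hneg

theorem le_sqrt_of_riccati_of_forall_pos {lmax : ℝ} (hlmax : 0 ≤ lmax)
    (hode : ∀ t ≥ a, HasDerivAt ω (ω t ^ 2 - lam t) t) (hpos : ∀ t ≥ a, 0 < ω t)
    (hlam : ∀ t ≥ a, lam t ≤ lmax) : ω a ≤ √lmax := by
  by_contra! h
  have hωa : 0 < ω a ^ 2 := pow_pos (hpos a le_rfl) 2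
  have hlt : lmax < ω a ^ 2 := (Real.sqrt_lt' (hpos a le_rfl)).1 h
  have hε : 0 < 1 - lmax / ω a ^ 2 := sub_pos.2 ((div_lt_one hωa).2 hlt)
  have habove : ∀ t ≥ a, ω a ≤ ω t := fun t =>
    le_of_hasDerivAt_pos_at_level hode le_rfl fun s hs hωs => by
      rw [← hωs]; linarith [hlam s hs]
  have hinv : ∀ t ≥ a, HasDerivAt (fun s => (ω s)⁻¹) (-(ω t ^ 2 - lam t) / ω t ^ 2) t :=
    fun t ht => (hode t ht).inv (hpos t ht).ne'
  obtain ⟨t, ht, hneg⟩ := exists_lt_zero_of_hasDerivAt_le_neg hε hinv fun t ht => by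
    have hωt : ω a ^ 2 ≤ ω t ^ 2 := pow_le_pow_left₀ (hpos a le_rfl).le (habove t ht) 2
    calc -(ω t ^ 2 - lam t) / ω t ^ 2 = lam t / ω t ^ 2 - 1 := by
          field_simp [(hpos t ht).ne']; ring
      _ ≤ lmax / ω a ^ 2 - 1 := by gcongr; exact hlam t ht
      _ = -(1 - lmax / ω a ^ 2) := by ring
  exact (inv_pos.2 (hpos t ht)).not_gt hneg

end Riccati

theorem riccati_omega_bounds_general (lam ω : ℝ → ℝ) (lmin lmax : ℝ)
    (hmin : 0 < lmin) (hminmax : lmin ≤ lmax)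
    (hlam_mem : ∀ t ∈ Set.Ici (0 : ℝ), lam t ∈ Set.Icc lmin lmax)
    (hode : ∀ t ∈ Set.Ici (0 : ℝ), HasDerivAt ω (ω t ^ 2 - lam t) t)
    (hpos : ∀ t ∈ Set.Ici (0 : ℝ), 0 < ω t) :
    ∀ t > (0 : ℝ), ω t ∈ Set.Icc (Real.sqrt lmin) (Real.sqrt lmax) := by
  intro a ha
  have hge : ∀ t ≥ a, t ∈ Set.Ici (0 : ℝ) := fun t ht => ha.le.trans ht
  exact ⟨sqrt_le_of_riccati_of_forall_pos (fun t ht => hode t (hge t ht))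
      (fun t ht => hpos t (hge t ht)) fun t ht => (hlam_mem t (hge t ht)).1,
    le_sqrt_of_riccati_of_forall_pos (hmin.le.trans hminmax) (fun t ht => hode t (hge t ht))
      (fun t ht => hpos t (hge t ht)) fun t ht => (hlam_mem t (hge t ht)).2⟩

/-- If `lam` is continuous with values in `[lmin, lmax]` (with `0 < lmin ≤ lmax`)
and `ω` solves the Riccati equation `ω' = ω² − λ` on `[0,∞)` while remaining positive
(hence finite), then `ω(t) ∈ [√lmin, √lmax]` for all `t > 0`. -/
theorem riccati_omega_bounds (lam ω : ℝ → ℝ) (lmin lmax : ℝ)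
    (hmin : 0 < lmin) (hminmax : lmin ≤ lmax)
    (hlam_cont : ContinuousOn lam (Set.Ici 0))
    (hlam_mem : ∀ t ∈ Set.Ici (0 : ℝ), lam t ∈ Set.Icc lmin lmax)
    (hode : ∀ t ∈ Set.Ici (0 : ℝ), HasDerivAt ω (ω t ^ 2 - lam t) t)
    (hpos : ∀ t ∈ Set.Ici (0 : ℝ), 0 < ω t) :
    ∀ t > (0 : ℝ), ω t ∈ Set.Icc (Real.sqrt lmin) (Real.sqrt lmax) :=
  riccati_omega_bounds_general lam ω lmin lmax hmin hminmax hlam_mem hode hpos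
end

section
/- Let λ : [0,∞) → ℝ be continuous with λ(t) ∈ [λ_min, λ_max], 0 < λ_min ≤ λ_max. Then there exists a unique initial value ω_i > 0 such that the solution ω of ω̇ = ω² − λ with ω(0) = ω_i stays positive and bounded for all t ≥ 0. -/
open MeasureTheory Set BoundedContinuousFunction
set_option maxHeartbeats 1000000

namespace RiccatiAux

noncomputable def U (k : ℝ) (g : ℝ → ℝ) (t : ℝ) : ℝ :=
  Real.exp (k * t) * ∫ s in Set.Ioi t, Real.exp (-(k * s)) * g s

lemma exp_deriv_aux (k x : ℝ) :
    HasDerivAt (fun s => Real.exp (-(k * s))) (-k * Real.exp (-(k * x))) x := by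
  have h : HasDerivAt (fun s : ℝ => -(k * s)) (-k) x := by
    simpa using ((hasDerivAt_id x).const_mul k).fun_neg
  simpa [mul_comm] using h.exp

lemma exp_mul_exp_neg (k t : ℝ) : Real.exp (k * t) * Real.exp (-(k * t)) = 1 := by
  rw [← Real.exp_add]; simp

lemma expneg_int {k : ℝ} (hk : 0 < k) (t : ℝ) :
    IntegrableOn (fun s => Real.exp (-(k * s))) (Set.Ioi t) := by
  simpa [neg_mul] using exp_neg_integrableOn_Ioi t hk

lemma key_cancel {k : ℝ} (hk : 0 < k) (t c : ℝ) :
    Real.exp (k * t) * (Real.exp (-(k * t)) / k * c) = c / k := by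
  rw [show Real.exp (k * t) * (Real.exp (-(k * t)) / k * c)
      = (Real.exp (k * t) * Real.exp (-(k * t))) * (c / k) from by ring,
    exp_mul_exp_neg, one_mul]

lemma integral_exp_neg_mul_Ioi {k : ℝ} (hk : 0 < k) (t : ℝ) :
    ∫ s in Set.Ioi t, Real.exp (-(k * s)) = Real.exp (-(k * t)) / k := by
  have hderiv : ∀ x ∈ Set.Ici t,
      HasDerivAt (fun s => -(Real.exp (-(k * s)) / k)) (Real.exp (-(k * x))) x := by
    intro x _
    have h2 := ((exp_deriv_aux k x).div_const k).fun_neg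
    refine h2.congr_deriv ?_
    rw [neg_mul, neg_div, neg_neg, mul_div_cancel_left₀ _ hk.ne']
  have h1 : Filter.Tendsto (fun s : ℝ => k * s) Filter.atTop Filter.atTop :=
    Filter.Tendsto.const_mul_atTop hk Filter.tendsto_id
  have h2 : Filter.Tendsto (fun s : ℝ => -(k * s)) Filter.atTop Filter.atBot :=
    Filter.tendsto_neg_atTop_atBot.comp h1
  have htend : Filter.Tendsto (fun s : ℝ => -(Real.exp (-(k * s)) / k))
      Filter.atTop (nhds 0) := by
    have h3 := ((Real.tendsto_exp_atBot.comp h2).div_const k).neg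
    simpa using h3
  have := integral_Ioi_of_hasDerivAt_of_tendsto' hderiv (expneg_int hk t) htend
  rw [this]; ring

lemma integrableOn_exp_mul {k : ℝ} (hk : 0 < k) {g : ℝ → ℝ} (hg : Continuous g) {C : ℝ}
    (hC : ∀ s, |g s| ≤ C) (t : ℝ) :
    IntegrableOn (fun s => Real.exp (-(k * s)) * g s) (Set.Ioi t) := by
  have hbound : IntegrableOn (fun s => Real.exp (-(k * s)) * C) (Set.Ioi t) :=
    (expneg_int hk t).mul_const C
  have hcont : Continuous fun s => Real.exp (-(k * s)) * g s := by
    exact (Real.continuous_exp.comp (continuous_const.mul continuous_id).neg).mul hg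
  refine Integrable.mono' hbound hcont.aestronglyMeasurable ?_
  filter_upwards with s
  rw [Real.norm_eq_abs, abs_mul, abs_of_pos (Real.exp_pos _)]
  exact mul_le_mul_of_nonneg_left (hC s) (Real.exp_pos _).le

lemma U_mem {k : ℝ} (hk : 0 < k) {g : ℝ → ℝ} (hg : Continuous g) {c1 c2 : ℝ}
    (hgc : ∀ s, g s ∈ Set.Icc c1 c2) (t : ℝ) :
    U k g t ∈ Set.Icc (c1 / k) (c2 / k) := by
  have hC : ∀ s, |g s| ≤ max |c1| |c2| := fun s =>
    abs_le_max_abs_abs (hgc s).1 (hgc s).2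
  have hint := integrableOn_exp_mul hk hg hC t
  have hexp : (∫ s in Set.Ioi t, Real.exp (-(k * s))) = Real.exp (-(k * t)) / k :=
    integral_exp_neg_mul_Ioi hk t
  have h1 : (∫ s in Set.Ioi t, Real.exp (-(k * s)) * c1)
      ≤ ∫ s in Set.Ioi t, Real.exp (-(k * s)) * g s :=
    setIntegral_mono_on ((expneg_int hk t).mul_const c1) hint measurableSet_Ioi
      (fun s _ => mul_le_mul_of_nonneg_left (hgc s).1 (Real.exp_pos _).le)
  have h2 : (∫ s in Set.Ioi t, Real.exp (-(k * s)) * g s)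
      ≤ ∫ s in Set.Ioi t, Real.exp (-(k * s)) * c2 :=
    setIntegral_mono_on hint ((expneg_int hk t).mul_const c2) measurableSet_Ioi
      (fun s _ => mul_le_mul_of_nonneg_left (hgc s).2 (Real.exp_pos _).le)
  rw [integral_mul_const, hexp] at h1 h2
  have hE := Real.exp_pos (k * t)
  have hh := exp_mul_exp_neg k t
  constructor
  · have h4 := mul_le_mul_of_nonneg_left h1 hE.le
    calc c1 / k = Real.exp (k * t) * (Real.exp (-(k * t)) / k * c1) :=
          (key_cancel hk t c1).symm
      _ ≤ U k g t := h4
  · have h4 := mul_le_mul_of_nonneg_left h2 hE.le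
    calc U k g t ≤ Real.exp (k * t) * (Real.exp (-(k * t)) / k * c2) := h4
      _ = c2 / k := key_cancel hk t c2

lemma U_hasDerivAt {k : ℝ} (hk : 0 < k) {g : ℝ → ℝ} (hg : Continuous g) {C : ℝ}
    (hC : ∀ s, |g s| ≤ C) (t : ℝ) :
    HasDerivAt (U k g) (k * U k g t - g t) t := by
  set f : ℝ → ℝ := fun s => Real.exp (-(k * s)) * g s with hf
  have hfc : Continuous f :=
    (Real.continuous_exp.comp (continuous_const.mul continuous_id).neg).mul hg
  have hint : ∀ u : ℝ, IntegrableOn f (Set.Ioi u) := integrableOn_exp_mul hk hg hC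
  have hsplit : ∀ u : ℝ,
      (∫ s in Set.Ioi u, f s) = (∫ s in Set.Ioi 0, f s) - ∫ s in (0:ℝ)..u, f s := by
    intro u
    rcases le_total 0 u with h | h
    · rw [intervalIntegral.integral_of_le h]
      have h3 := setIntegral_union (Ioc_disjoint_Ioi le_rfl) measurableSet_Ioi
        ((hint 0).mono_set Set.Ioc_subset_Ioi_self) (hint u)
      rw [Set.Ioc_union_Ioi_eq_Ioi h] at h3
      rw [h3]; ring
    · rw [intervalIntegral.integral_symm, intervalIntegral.integral_of_le h]
      have h3 := setIntegral_union (Ioc_disjoint_Ioi le_rfl) measurableSet_Ioi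
        ((hint u).mono_set Set.Ioc_subset_Ioi_self) (hint 0)
      rw [Set.Ioc_union_Ioi_eq_Ioi h] at h3
      rw [h3]; ring
  have hG : HasDerivAt (fun u => (∫ s in Set.Ioi 0, f s) - ∫ s in (0:ℝ)..u, f s) (-(f t)) t := by
    have h1 : HasDerivAt (fun u => ∫ s in (0:ℝ)..u, f s) (f t) t :=
      intervalIntegral.integral_hasDerivAt_right (hfc.intervalIntegrable 0 t)
        (hfc.stronglyMeasurableAtFilter volume (nhds t)) hfc.continuousAt
    simpa using h1.const_sub _
  have hE : HasDerivAt (fun u => Real.exp (k * u)) (k * Real.exp (k * t)) t := by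
    simpa [mul_comm] using ((hasDerivAt_id t).const_mul k).exp
  have hU := hE.fun_mul hG
  have heq : U k g = fun u =>
      Real.exp (k * u) * ((∫ s in Set.Ioi 0, f s) - ∫ s in (0:ℝ)..u, f s) :=
    funext fun u => by rw [U, hsplit u]
  rw [heq]
  refine hU.congr_deriv ?_
  have h2 : Real.exp (k * t) * (Real.exp (-(k * t)) * g t) = g t := by
    rw [← mul_assoc, exp_mul_exp_neg, one_mul]
  simp only [hf]
  beta_reduce
  linear_combination -h2

lemma U_dist {k : ℝ} (hk : 0 < k) {g g' : ℝ → ℝ} (hg : Continuous g) (hg' : Continuous g')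
    {C C' D : ℝ} (hCg : ∀ s, |g s| ≤ C) (hCg' : ∀ s, |g' s| ≤ C')
    (hD : ∀ s, |g s - g' s| ≤ D) (t : ℝ) :
    |U k g t - U k g' t| ≤ D / k := by
  have hint := integrableOn_exp_mul hk hg hCg t
  have hint' := integrableOn_exp_mul hk hg' hCg' t
  have hint2 : IntegrableOn (fun s => Real.exp (-(k * s)) * (g s - g' s)) (Set.Ioi t) := by
    simpa [mul_sub] using hint.fun_sub hint'
  have hsub : U k g t - U k g' t
      = Real.exp (k * t) * ∫ s in Set.Ioi t, Real.exp (-(k * s)) * (g s - g' s) := by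
    rw [U, U, ← mul_sub, ← integral_sub hint hint']
    congr 1
    apply integral_congr_ae
    filter_upwards with s
    ring
  rw [hsub, abs_mul, abs_of_pos (Real.exp_pos _)]
  have habs : |∫ s in Set.Ioi t, Real.exp (-(k * s)) * (g s - g' s)|
      ≤ ∫ s in Set.Ioi t, Real.exp (-(k * s)) * D := by
    have hnorm : ‖∫ s in Set.Ioi t, Real.exp (-(k * s)) * (g s - g' s)‖
        ≤ ∫ s in Set.Ioi t, ‖Real.exp (-(k * s)) * (g s - g' s)‖ :=
      MeasureTheory.norm_integral_le_integral_norm _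
    refine le_trans (by simpa [Real.norm_eq_abs] using hnorm) ?_
    have hint3 : IntegrableOn (fun s => Real.exp (-(k * s)) * |g s - g' s|) (Set.Ioi t) := by
      have := hint2.abs
      simpa [IntegrableOn, abs_mul, abs_of_pos (Real.exp_pos _)] using this
    refine setIntegral_mono_on hint3
      ((expneg_int hk t).mul_const D) measurableSet_Ioi ?_
    intro s _
    exact mul_le_mul_of_nonneg_left (hD s) (Real.exp_pos _).le
  have hDexp : (∫ s in Set.Ioi t, Real.exp (-(k * s)) * D) = Real.exp (-(k * t)) / k * D := by
    rw [integral_mul_const, integral_exp_neg_mul_Ioi hk]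
  have hh := exp_mul_exp_neg k t
  calc Real.exp (k * t) * |∫ s in Set.Ioi t, Real.exp (-(k * s)) * (g s - g' s)|
      ≤ Real.exp (k * t) * (Real.exp (-(k * t)) / k * D) := by
        rw [← hDexp]
        exact mul_le_mul_of_nonneg_left habs (Real.exp_pos _).le
    _ = D / k := key_cancel hk t D

noncomputable def clampF (a b x : ℝ) : ℝ := max a (min x b)

lemma clampF_mem {a b : ℝ} (h : a ≤ b) (x : ℝ) : clampF a b x ∈ Set.Icc a b :=
  ⟨le_max_left _ _, max_le h (min_le_right _ _)⟩

lemma clampF_eq {a b x : ℝ} (h1 : a ≤ x) (h2 : x ≤ b) : clampF a b x = x := by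
  rw [clampF, min_eq_left h2, max_eq_right h1]

lemma clampF_lip (a b x y : ℝ) : |clampF a b x - clampF a b y| ≤ |x - y| := by
  rw [clampF, clampF, max_comm a (min x b), max_comm a (min y b)]
  refine (abs_max_sub_max_le_abs _ _ _).trans ?_
  have := abs_min_sub_min_le_max x b y b
  simpa using this

noncomputable def psiF (k a b x : ℝ) : ℝ := k * clampF a b x - clampF a b x ^ 2

lemma psiF_continuous (k a b : ℝ) : Continuous (psiF k a b) := by
  have hc : Continuous (clampF a b) := continuous_const.max (continuous_id.min continuous_const)
  exact (continuous_const.mul hc).sub (hc.pow 2)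

lemma psiF_mem {a b : ℝ} (hab : a ≤ b) {k : ℝ} (hk : 2 * b ≤ k) (x : ℝ) :
    psiF k a b x ∈ Set.Icc (k * a - a ^ 2) (k * b - b ^ 2) := by
  obtain ⟨h1, h2⟩ := clampF_mem hab x
  rw [psiF]
  constructor
  · nlinarith
  · nlinarith

lemma psiF_lip {a b : ℝ} (hab : a ≤ b) (ha : 0 ≤ a) {k : ℝ} (hk : 2 * b ≤ k) (x y : ℝ) :
    |psiF k a b x - psiF k a b y| ≤ (k - 2 * a) * |x - y| := by
  obtain ⟨hx1, hx2⟩ := clampF_mem hab x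
  obtain ⟨hy1, hy2⟩ := clampF_mem hab y
  have h1 : psiF k a b x - psiF k a b y
      = (clampF a b x - clampF a b y) * (k - (clampF a b x + clampF a b y)) := by
    rw [psiF, psiF]; ring
  rw [h1, abs_mul]
  have h2 : |k - (clampF a b x + clampF a b y)| ≤ k - 2 * a := by
    rw [abs_le]
    constructor <;> nlinarith
  calc |clampF a b x - clampF a b y| * |k - (clampF a b x + clampF a b y)|
      ≤ |x - y| * (k - 2 * a) :=
        mul_le_mul (clampF_lip a b x y) h2 (abs_nonneg _) (abs_nonneg _)
    _ = (k - 2 * a) * |x - y| := mul_comm _ _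

lemma riccati_uniq_aux (lam ω₁ ω₂ : ℝ → ℝ) (M : ℝ)
    (h₁d : ∀ t ∈ Set.Ici (0:ℝ), HasDerivAt ω₁ (ω₁ t ^ 2 - lam t) t)
    (h₂d : ∀ t ∈ Set.Ici (0:ℝ), HasDerivAt ω₂ (ω₂ t ^ 2 - lam t) t)
    (h₁pos : ∀ t ∈ Set.Ici (0:ℝ), 0 < ω₁ t)
    (h₂pos : ∀ t ∈ Set.Ici (0:ℝ), 0 < ω₂ t)
    (h₂M : ∀ t ∈ Set.Ici (0:ℝ), ω₂ t ≤ M)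
    (hlt : ω₁ 0 < ω₂ 0) : False := by
  set f : ℝ → ℝ := fun s => ω₁ (max s 0) + ω₂ (max s 0) with hfdef
  have hmax : Continuous fun s : ℝ => max s 0 := continuous_id.max continuous_const
  have hmem : ∀ s : ℝ, max s 0 ∈ Set.Ici (0:ℝ) := fun s => le_max_right s 0
  have hω₁c : ContinuousOn ω₁ (Set.Ici 0) := fun x hx =>
    ((h₁d x hx).continuousAt).continuousWithinAt
  have hω₂c : ContinuousOn ω₂ (Set.Ici 0) := fun x hx =>
    ((h₂d x hx).continuousAt).continuousWithinAt
  have hfc : Continuous f :=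
    (hω₁c.comp_continuous hmax hmem).add (hω₂c.comp_continuous hmax hmem)
  have hfeq : ∀ t ∈ Set.Ici (0:ℝ), f t = ω₁ t + ω₂ t := fun t ht => by
    simp only [hfdef]; rw [max_eq_left ht]
  have hfpos : ∀ s : ℝ, 0 < f s := fun s => add_pos (h₁pos _ (hmem s)) (h₂pos _ (hmem s))
  set F : ℝ → ℝ := fun u => ∫ s in (0:ℝ)..u, f s with hFdef
  have hF : ∀ t : ℝ, HasDerivAt F (f t) t := fun t =>
    intervalIntegral.integral_hasDerivAt_right (hfc.intervalIntegrable 0 t)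
      (hfc.stronglyMeasurableAtFilter volume (nhds t)) hfc.continuousAt
  set h : ℝ → ℝ := fun u => (ω₂ u - ω₁ u) * Real.exp (-F u) with hhdef
  have hhd : ∀ t ∈ Set.Ici (0:ℝ), HasDerivAt h 0 t := by
    intro t ht
    have hd : HasDerivAt (fun u => ω₂ u - ω₁ u) ((ω₂ t ^ 2 - lam t) - (ω₁ t ^ 2 - lam t)) t :=
      (h₂d t ht).sub (h₁d t ht)
    have hEx : HasDerivAt (fun u => Real.exp (-F u)) (Real.exp (-F t) * -(f t)) t :=
      ((hF t).neg).exp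
    have h5 := hd.fun_mul hEx
    refine h5.congr_deriv ?_
    rw [hfeq t ht]
    ring
  have hconst : ∀ t ∈ Set.Ici (0:ℝ), h t = h 0 := by
    intro t ht
    exact constant_of_has_deriv_right_zero (a := 0) (b := t)
      (fun x hx => ((hhd x hx.1).continuousAt).continuousWithinAt)
      (fun x hx => (hhd x hx.1).hasDerivWithinAt) t ⟨ht, le_rfl⟩
  have h0 : h 0 = ω₂ 0 - ω₁ 0 := by
    simp [hhdef, hFdef, intervalIntegral.integral_same]
  set d0 : ℝ := ω₂ 0 - ω₁ 0 with hd0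
  have hd0pos : 0 < d0 := by rw [hd0]; linarith
  have hkey : ∀ t ∈ Set.Ici (0:ℝ), ω₂ t - ω₁ t = d0 * Real.exp (F t) := by
    intro t ht
    have h2 := (hconst t ht).trans h0
    simp only [hhdef] at h2
    have h3 := congrArg (fun z => z * Real.exp (F t)) h2
    rwa [mul_assoc, ← Real.exp_add, neg_add_cancel, Real.exp_zero, mul_one] at h3
  have hFnonneg : ∀ t ∈ Set.Ici (0:ℝ), 0 ≤ F t := fun t ht =>
    intervalIntegral.integral_nonneg ht (fun u _ => (hfpos u).le)
  have hdge : ∀ t ∈ Set.Ici (0:ℝ), d0 ≤ ω₂ t - ω₁ t := by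
    intro t ht
    rw [hkey t ht]
    nlinarith [Real.one_le_exp (hFnonneg t ht)]
  have hfge : ∀ s : ℝ, d0 ≤ f s := by
    intro s
    have h1 := hdge _ (hmem s)
    have h2 := h₁pos _ (hmem s)
    simp only [hfdef]
    linarith
  have hFge : ∀ t ∈ Set.Ici (0:ℝ), d0 * t ≤ F t := by
    intro t ht
    have h1 : (∫ _s in (0:ℝ)..t, d0) ≤ F t :=
      intervalIntegral.integral_mono_on ht intervalIntegrable_const
        (hfc.intervalIntegrable 0 t) (fun x _ => hfge x)
    rw [intervalIntegral.integral_const, smul_eq_mul, sub_zero] at h1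
    linarith
  have hM : 0 < M := lt_of_lt_of_le (h₂pos 0 Set.self_mem_Ici) (h₂M 0 Set.self_mem_Ici)
  set t0 : ℝ := max 1 ((Real.log (M / d0) + 1) / d0) with ht0
  have ht0mem : t0 ∈ Set.Ici (0:ℝ) := Set.mem_Ici.mpr (le_trans zero_le_one (le_max_left _ _))
  have h1 : Real.log (M / d0) + 1 ≤ d0 * t0 := by
    have h2 : (Real.log (M / d0) + 1) / d0 ≤ t0 := le_max_right _ _
    calc Real.log (M / d0) + 1 = d0 * ((Real.log (M / d0) + 1) / d0) := by field_simp
      _ ≤ d0 * t0 := mul_le_mul_of_nonneg_left h2 hd0pos.le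
  have h2 : M / d0 < Real.exp (d0 * t0) := by
    calc M / d0 = Real.exp (Real.log (M / d0)) := (Real.exp_log (by positivity)).symm
      _ < Real.exp (d0 * t0) := Real.exp_lt_exp.mpr (by linarith)
  have h3 : M < Real.exp (d0 * t0) * d0 := (div_lt_iff₀ hd0pos).mp h2
  have h4 : ω₂ t0 - ω₁ t0 = d0 * Real.exp (F t0) := hkey t0 ht0mem
  have h5 : d0 * Real.exp (d0 * t0) ≤ d0 * Real.exp (F t0) :=
    mul_le_mul_of_nonneg_left (Real.exp_le_exp.mpr (hFge t0 ht0mem)) hd0pos.le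
  have h6 := h₂M t0 ht0mem
  have h7 := h₁pos t0 ht0mem
  linarith

end RiccatiAux

/-- For continuous `lam` with values in `[lmin, lmax]`, `0 < lmin ≤ lmax`,
there is a unique initial value `ωi > 0` such that the solution of the Riccati equation
`ω' = ω² − λ` with `ω(0) = ωi` remains positive and bounded on `[0,∞)`. -/
theorem riccati_unique_bounded_solution (lam : ℝ → ℝ) (lmin lmax : ℝ)
    (hmin : 0 < lmin) (hminmax : lmin ≤ lmax)
    (hlam_cont : ContinuousOn lam (Set.Ici 0))
    (hlam_mem : ∀ t ∈ Set.Ici (0 : ℝ), lam t ∈ Set.Icc lmin lmax) :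
    ∃! ωi : ℝ, 0 < ωi ∧
      ∃ ω : ℝ → ℝ, ω 0 = ωi ∧
        (∀ t ∈ Set.Ici (0 : ℝ), HasDerivAt ω (ω t ^ 2 - lam t) t) ∧
        (∀ t ∈ Set.Ici (0 : ℝ), 0 < ω t) ∧
        (∃ M : ℝ, ∀ t ∈ Set.Ici (0 : ℝ), ω t ≤ M) := by
  classical
  have ha0 : 0 < Real.sqrt lmin := Real.sqrt_pos.mpr hmin
  set a := Real.sqrt lmin with hadef
  set b := Real.sqrt lmax with hbdef
  have ha2 : a ^ 2 = lmin := Real.sq_sqrt hmin.le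
  have hb2 : b ^ 2 = lmax := Real.sq_sqrt (hmin.trans_le hminmax).le
  have hab : a ≤ b := Real.sqrt_le_sqrt hminmax
  set k : ℝ := 2 * b + 1 with hkdef
  have hb0 : 0 < b := lt_of_lt_of_le ha0 hab
  have hk0 : 0 < k := by rw [hkdef]; linarith
  have hkb : 2 * b ≤ k := by rw [hkdef]; linarith
  set lamE : ℝ → ℝ := fun t => lam (max t 0) with hlamEdef
  have hlamEc : Continuous lamE :=
    hlam_cont.comp_continuous (continuous_id.max continuous_const) (fun x => le_max_right x 0)
  have hlamEmem : ∀ s, lamE s ∈ Set.Icc lmin lmax := fun s => hlam_mem _ (le_max_right s 0)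
  set G : (ℝ →ᵇ ℝ) → ℝ → ℝ := fun v s => lamE s + RiccatiAux.psiF k a b (v s) with hGdef
  have hGc : ∀ v : ℝ →ᵇ ℝ, Continuous (G v) := fun v =>
    hlamEc.add ((RiccatiAux.psiF_continuous k a b).comp v.continuous)
  have hGmem : ∀ (v : ℝ →ᵇ ℝ) (s : ℝ), G v s ∈ Set.Icc (k * a) (k * b) := by
    intro v s
    obtain ⟨h1, h2⟩ := hlamEmem s
    obtain ⟨h3, h4⟩ := RiccatiAux.psiF_mem hab hkb (v s)
    constructor
    · simp only [hGdef]; nlinarith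
    · simp only [hGdef]; nlinarith
  have hGabs : ∀ (v : ℝ →ᵇ ℝ) (s : ℝ), |G v s| ≤ k * b := by
    intro v s
    obtain ⟨h1, h2⟩ := hGmem v s
    rw [abs_le]
    refine ⟨?_, h2⟩
    nlinarith
  have hUc : ∀ v : ℝ →ᵇ ℝ, Continuous (RiccatiAux.U k (G v)) := fun v =>
    continuous_iff_continuousAt.mpr fun t =>
      (RiccatiAux.U_hasDerivAt hk0 (hGc v) (hGabs v) t).continuousAt
  have hUmem : ∀ (v : ℝ →ᵇ ℝ) (t : ℝ), RiccatiAux.U k (G v) t ∈ Set.Icc a b := by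
    intro v t
    have h := RiccatiAux.U_mem hk0 (hGc v) (hGmem v) t
    rwa [mul_div_cancel_left₀ a hk0.ne', mul_div_cancel_left₀ b hk0.ne'] at h
  set T : (ℝ →ᵇ ℝ) → (ℝ →ᵇ ℝ) := fun v =>
    BoundedContinuousFunction.mkOfBound ⟨RiccatiAux.U k (G v), hUc v⟩ (b - a)
      (fun x y => by
        obtain ⟨hx1, hx2⟩ := hUmem v x
        obtain ⟨hy1, hy2⟩ := hUmem v y
        rw [Real.dist_eq, abs_le]
        constructor <;> simp only [ContinuousMap.coe_mk] <;> linarith) with hTdef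
  have hTapp : ∀ (v : ℝ →ᵇ ℝ) (t : ℝ), T v t = RiccatiAux.U k (G v) t := fun v t => rfl
  set q : ℝ := (k - 2 * a) / k with hqdef
  have hq0 : 0 ≤ q := div_nonneg (by linarith) hk0.le
  have hq1 : q < 1 := by rw [hqdef, div_lt_one hk0]; linarith
  have hlip : LipschitzWith ⟨q, hq0⟩ T := by
    apply LipschitzWith.of_dist_le_mul
    intro v w
    refine (BoundedContinuousFunction.dist_le (by positivity)).mpr fun t => ?_
    rw [Real.dist_eq, hTapp, hTapp]
    have hDest : ∀ s, |G v s - G w s| ≤ (k - 2 * a) * dist v w := by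
      intro s
      have h1 : G v s - G w s = RiccatiAux.psiF k a b (v s) - RiccatiAux.psiF k a b (w s) := by
        simp only [hGdef]; ring
      rw [h1]
      refine (RiccatiAux.psiF_lip hab ha0.le hkb (v s) (w s)).trans ?_
      have h2 := BoundedContinuousFunction.dist_coe_le_dist (f := v) (g := w) s
      rw [Real.dist_eq] at h2
      exact mul_le_mul_of_nonneg_left h2 (by linarith)
    have h3 := RiccatiAux.U_dist hk0 (hGc v) (hGc w) (hGabs v) (hGabs w) hDest t
    calc |RiccatiAux.U k (G v) t - RiccatiAux.U k (G w) t|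
        ≤ (k - 2 * a) * dist v w / k := h3
      _ = q * dist v w := by rw [hqdef]; ring
  have hcontr : ContractingWith ⟨q, hq0⟩ T := ⟨by exact_mod_cast hq1, hlip⟩
  set ω : ℝ →ᵇ ℝ := ContractingWith.fixedPoint T hcontr with hωdef
  have hfix : T ω = ω := hcontr.fixedPoint_isFixedPt
  have hωeq : ∀ t, ω t = RiccatiAux.U k (G ω) t := by
    intro t
    conv_lhs => rw [← hfix]
    exact hTapp ω t
  have hωmem : ∀ t, ω t ∈ Set.Icc a b := fun t => (hωeq t) ▸ hUmem ω t
  have hGω : ∀ t, G ω t = lamE t + (k * ω t - ω t ^ 2) := by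
    intro t
    simp only [hGdef]
    rw [RiccatiAux.psiF, RiccatiAux.clampF_eq (hωmem t).1 (hωmem t).2]
  have hωd : ∀ t : ℝ, HasDerivAt ω (ω t ^ 2 - lamE t) t := by
    intro t
    have h := RiccatiAux.U_hasDerivAt hk0 (hGc ω) (hGabs ω) t
    have h2 : RiccatiAux.U k (G ω) = ⇑ω := funext fun u => (hωeq u).symm
    rw [h2] at h
    convert h using 1
    rw [hGω t]
    ring
  have hωd' : ∀ t ∈ Set.Ici (0:ℝ), HasDerivAt (⇑ω) (ω t ^ 2 - lam t) t := by
    intro t ht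
    have h := hωd t
    have : lamE t = lam t := by simp only [hlamEdef]; rw [max_eq_left ht]
    rwa [this] at h
  have hωpos : ∀ t ∈ Set.Ici (0:ℝ), 0 < ω t := fun t _ => lt_of_lt_of_le ha0 (hωmem t).1
  have hωbdd : ∀ t ∈ Set.Ici (0:ℝ), ω t ≤ b := fun t _ => (hωmem t).2
  refine ⟨ω 0, ⟨hωpos 0 Set.self_mem_Ici, ⇑ω, rfl, hωd', hωpos, b, hωbdd⟩, ?_⟩
  rintro y ⟨hy0, ω', hω'0, hd', hpos', M', hM'⟩
  by_contra hne
  rcases lt_or_gt_of_ne hne with hlt | hgt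
  · exact RiccatiAux.riccati_uniq_aux lam ω' (⇑ω) b hd' hωd'
      hpos' hωpos hωbdd (by rw [hω'0]; exact hlt)
  · exact RiccatiAux.riccati_uniq_aux lam (⇑ω) ω' M' hωd' hd'
      hωpos hpos' hM' (by rw [hω'0]; exact hgt)
end

section
/- Let λ : [0,∞) → ℝ be continuous with λ(t) ∈ [λ_min, λ_max], 0 < λ_min ≤ λ_max, and let γ solve γ̇ = λ − γ² with initial condition γ(0) > 0. Then γ(t) > 0 and γ is finite for all t ≥ 0, and √λ_min ≤ liminf_{t→∞} γ(t) ≤ limsup_{t→∞} γ(t) ≤ √λ_max. -/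
/-!
For `γ̇ = λ - γ²` with `λ_min ≤ λ ≤ λ_max`, every level `a` with `a² < λ_min` is a lower barrier
and every level `a > 0` with `a² > λ_max` an upper barrier: where `γ = a` the derivative has a
definite sign, so `γ` cannot cross `a` in the wrong direction. A small positive lower barrier
gives positivity. While `0 < γ ≤ a` with `a² < λ_min`, `γ̇ ≥ λ_min - a² > 0`, so `γ` grows at a
linear rate until it reaches `a`, and from then on stays above it; symmetrically for upper
barriers. Hence `γ` is eventually above every `a < √λ_min` and below every `a > √λ_max`.
-/

open Filter Set

theorem le_image_of_deriv_pos_of_eq {f f' : ℝ → ℝ} {s a : ℝ}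
    (hf : ∀ t ∈ Ici s, HasDerivAt f (f' t) t) (hs : a ≤ f s)
    (hpos : ∀ t ∈ Ici s, f t = a → 0 < f' t) : ∀ t ∈ Ici s, a ≤ f t := fun t ht =>
  image_le_of_deriv_right_lt_deriv_boundary' (f := fun _ => a) (f' := 0) (b := t)
    continuousOn_const (fun _ _ => hasDerivWithinAt_const _ _ _) hs
    (fun x hx => (hf x hx.1).continuousAt.continuousWithinAt)
    (fun x hx => (hf x hx.1).hasDerivWithinAt) (fun x hx hx' => hpos x hx.1 hx'.symm)
    ⟨ht, le_rfl⟩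

theorem exists_le_image_of_le_deriv {f f' : ℝ → ℝ} {s a c : ℝ}
    (hf : ∀ t ∈ Ici s, HasDerivAt f (f' t) t) (hc : 0 < c)
    (hgrow : ∀ t ∈ Ici s, f t < a → c ≤ f' t) : ∃ t ∈ Ici s, a ≤ f t := by
  by_contra! hlt
  have hlin : ∀ t ∈ Ici s, c * (t - s) ≤ f t - f s := by
    refine fun t ht => (convex_Ici s).mul_sub_le_image_sub_of_le_deriv
      (fun x hx => (hf x hx).continuousAt.continuousWithinAt)
      (fun x hx => (hf x (interior_subset hx)).differentiableAt.differentiableWithinAt)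
      (fun x hx => ?_) s self_mem_Ici t ht ht
    have hx' := interior_subset hx
    rw [(hf x hx').deriv]
    exact hgrow x hx' (hlt x hx')
  set t := s + (a - f s) / c
  have hts : t ∈ Ici s := le_add_of_nonneg_right (div_nonneg (sub_pos.2 (hlt s self_mem_Ici)).le hc.le)
  have hreach : c * (t - s) = a - f s := by simp only [t]; field_simp; ring
  linarith [hlin t hts, hlt t hts]

theorem eventually_le_image_of_le_deriv {f f' : ℝ → ℝ} {s a c : ℝ}
    (hf : ∀ t ∈ Ici s, HasDerivAt f (f' t) t) (hc : 0 < c)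
    (hgrow : ∀ t ∈ Ici s, f t ≤ a → c ≤ f' t) : ∀ᶠ t in atTop, a ≤ f t := by
  obtain ⟨T, hT, hTa⟩ := exists_le_image_of_le_deriv hf hc fun t ht h => hgrow t ht h.le
  have hTs : ∀ t ∈ Ici T, t ∈ Ici s := fun t ht => mem_Ici.2 (le_trans hT ht)
  exact eventually_atTop.2 ⟨T, le_image_of_deriv_pos_of_eq (fun t ht => hf t (hTs t ht)) hTa
    fun t ht h => hc.trans_le (hgrow t (hTs t ht) h.le)⟩

section Riccati

variable {lam γ : ℝ → ℝ} {lmin lmax : ℝ}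

theorem riccati_pos (hode : ∀ t ∈ Ici (0 : ℝ), HasDerivAt γ (lam t - γ t ^ 2) t)
    (hlam : ∀ t ∈ Ici (0 : ℝ), lmin ≤ lam t) (hmin : 0 < lmin) (hinit : 0 < γ 0) :
    ∀ t ∈ Ici (0 : ℝ), 0 < γ t := by
  set b := min (γ 0) (√lmin / 2)
  have hb : 0 < b := lt_min hinit (by positivity)
  have hb2 : b ^ 2 < lmin := by
    nlinarith [min_le_right (γ 0) (√lmin / 2), Real.sq_sqrt hmin.le]
  have hbarrier := le_image_of_deriv_pos_of_eq hode (min_le_left _ _) fun t ht h => by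
    rw [h]; linarith [hlam t ht]
  exact fun t ht => hb.trans_le (hbarrier t ht)

theorem riccati_eventually_ge (hode : ∀ t ∈ Ici (0 : ℝ), HasDerivAt γ (lam t - γ t ^ 2) t)
    (hlam : ∀ t ∈ Ici (0 : ℝ), lmin ≤ lam t) (hpos : ∀ t ∈ Ici (0 : ℝ), 0 < γ t)
    {a : ℝ} (ha : a < √lmin) : ∀ᶠ t in atTop, a ≤ γ t := by
  rcases le_or_gt a 0 with ha0 | ha0
  · exact eventually_atTop.2 ⟨0, fun t ht => ha0.trans (hpos t ht).le⟩
  have ha2 : a ^ 2 < lmin := (Real.lt_sqrt ha0.le).1 ha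
  refine eventually_le_image_of_le_deriv hode (sub_pos.2 ha2) fun t ht hle => ?_
  nlinarith [hlam t ht, hpos t ht]

theorem riccati_eventually_le (hode : ∀ t ∈ Ici (0 : ℝ), HasDerivAt γ (lam t - γ t ^ 2) t)
    (hlam : ∀ t ∈ Ici (0 : ℝ), lam t ≤ lmax) {a : ℝ} (ha : √lmax < a) :
    ∀ᶠ t in atTop, γ t ≤ a := by
  have ha0 : 0 < a := (Real.sqrt_nonneg _).trans_lt ha
  have ha2 : lmax < a ^ 2 := (Real.sqrt_lt' ha0).1 ha
  have hneg := eventually_le_image_of_le_deriv (f := fun t => -γ t) (a := -a)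
    (fun t ht => (hode t ht).neg) (sub_pos.2 ha2) fun t ht hle => by
      nlinarith [hlam t ht, neg_le_neg_iff.1 hle]
  exact hneg.mono fun t ht => neg_le_neg_iff.1 ht

end Riccati

theorem riccati_gamma_bounds_general (lam γ : ℝ → ℝ) (lmin lmax : ℝ)
    (hmin : 0 < lmin)
    (hlam_mem : ∀ t ∈ Set.Ici (0 : ℝ), lam t ∈ Set.Icc lmin lmax)
    (hode : ∀ t ∈ Set.Ici (0 : ℝ), HasDerivAt γ (lam t - γ t ^ 2) t)
    (hinit : 0 < γ 0) :
    (∀ t ∈ Set.Ici (0 : ℝ), 0 < γ t) ∧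
    Real.sqrt lmin ≤ Filter.liminf γ Filter.atTop ∧
    Filter.liminf γ Filter.atTop ≤ Filter.limsup γ Filter.atTop ∧
    Filter.limsup γ Filter.atTop ≤ Real.sqrt lmax := by
  have hpos := riccati_pos hode (fun t ht => (hlam_mem t ht).1) hmin hinit
  have hge : ∀ a < √lmin, ∀ᶠ t in atTop, a ≤ γ t := fun _ ha =>
    riccati_eventually_ge hode (fun t ht => (hlam_mem t ht).1) hpos ha
  have hle : ∀ a > √lmax, ∀ᶠ t in atTop, γ t ≤ a := fun _ ha =>
    riccati_eventually_le hode (fun t ht => (hlam_mem t ht).2) ha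
  have hbdd_ge : IsBoundedUnder (· ≥ ·) atTop γ :=
    ⟨0, eventually_atTop.2 ⟨0, fun t ht => (hpos t ht).le⟩⟩
  have hbdd_le : IsBoundedUnder (· ≤ ·) atTop γ := ⟨_, hle _ (lt_add_one _)⟩
  exact ⟨hpos, (le_liminf_iff' hbdd_le.isCoboundedUnder_flip hbdd_ge).2 hge,
    liminf_le_limsup hbdd_le hbdd_ge, (limsup_le_iff' hbdd_ge.isCoboundedUnder_flip hbdd_le).2 hle⟩

/-- If `γ` solves `γ' = λ − γ²` on `[0,∞)` with `γ(0) > 0`, where `lam` is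
continuous with values in `[lmin, lmax]`, `0 < lmin ≤ lmax`, then `γ` is positive (hence
finite) at all times and `√lmin ≤ liminf γ ≤ limsup γ ≤ √lmax`. -/
theorem riccati_gamma_bounds (lam γ : ℝ → ℝ) (lmin lmax : ℝ)
    (hmin : 0 < lmin) (hminmax : lmin ≤ lmax)
    (hlam_cont : ContinuousOn lam (Set.Ici 0))
    (hlam_mem : ∀ t ∈ Set.Ici (0 : ℝ), lam t ∈ Set.Icc lmin lmax)
    (hode : ∀ t ∈ Set.Ici (0 : ℝ), HasDerivAt γ (lam t - γ t ^ 2) t)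
    (hinit : 0 < γ 0) :
    (∀ t ∈ Set.Ici (0 : ℝ), 0 < γ t) ∧
    Real.sqrt lmin ≤ Filter.liminf γ Filter.atTop ∧
    Filter.liminf γ Filter.atTop ≤ Filter.limsup γ Filter.atTop ∧
    Filter.limsup γ Filter.atTop ≤ Real.sqrt lmax :=
  riccati_gamma_bounds_general lam γ lmin lmax hmin hlam_mem hode hinit
end

section
/- Let λ : [0,∞) → ℝ be continuous with values in [λ_min, λ_max], 0 < λ_min ≤ λ_max, and lim_{t→∞} λ(t) = λ_f. If ω is the bounded positive solution of ω̇ = ω² − λ, then lim_{t→∞} ω(t) = √λ_f. Similarly, if γ solves γ̇ = λ − γ² with γ(0) > 0, then lim_{t→∞} γ(t) = √λ_f. -/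
open Set Filter Topology

/-- Forward invariance: if `f a > K` and the derivative is positive whenever `f = K`,
then `f > K` on `[a, ∞)`. -/
lemma riccati_stay_above (f F : ℝ → ℝ) (a K : ℝ)
    (hd : ∀ t ∈ Set.Ici a, HasDerivAt f (F t) t)
    (h0 : K < f a)
    (hK : ∀ t ∈ Set.Ici a, f t = K → 0 < F t) :
    ∀ t ∈ Set.Ici a, K < f t := by
  intro b hb
  by_contra hcon
  push_neg at hcon
  have hab : a < b := by
    rcases lt_or_eq_of_le (Set.mem_Ici.mp hb) with h | h
    · exact h
    · exfalso; rw [← h] at hcon; linarith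
  set S : Set ℝ := Icc a b ∩ f ⁻¹' Iic K with hS
  have hcont : ContinuousOn f (Icc a b) := fun t ht =>
    ((hd t ht.1).continuousAt).continuousWithinAt
  have hclosed : IsClosed S := hcont.preimage_isClosed_of_isClosed isClosed_Icc isClosed_Iic
  have hne : S.Nonempty := ⟨b, ⟨hab.le, le_rfl⟩, hcon⟩
  have hbdd : BddBelow S := ⟨a, fun t ht => ht.1.1⟩
  set s := sInf S with hs_def
  have hsS : s ∈ S := hclosed.csInf_mem hne hbdd
  have hsa : a < s := by
    rcases lt_or_eq_of_le hsS.1.1 with h | h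
    · exact h
    · exfalso; have h2 : f s ≤ K := hsS.2; rw [← h] at h2; linarith
  have hsI : s ∈ Set.Ici a := le_of_lt hsa
  have hlt : ∀ t, a ≤ t → t < s → K < f t := by
    intro t ht hts
    by_contra h
    push_neg at h
    have : t ∈ S := ⟨⟨ht, hts.le.trans hsS.1.2⟩, h⟩
    exact absurd (csInf_le hbdd this) (not_le.mpr hts)
  have hnb : (𝓝[<] s).NeBot := nhdsLT_neBot s
  have hev : ∀ᶠ t in 𝓝[<] s, t ∈ Ioo a s := by
    have hmem : Ioi a ∈ 𝓝[<] s := nhdsWithin_le_nhds (Ioi_mem_nhds hsa)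
    filter_upwards [hmem, self_mem_nhdsWithin] with t h1 h2
    exact ⟨h1, h2⟩
  have hfs_ge : K ≤ f s := by
    have htend : Tendsto f (𝓝[<] s) (𝓝 (f s)) :=
      ((hd s hsI).continuousAt.tendsto).mono_left nhdsWithin_le_nhds
    refine ge_of_tendsto htend ?_
    filter_upwards [hev] with t ht
    exact (hlt t ht.1.le ht.2).le
  have hfs : f s = K := le_antisymm hsS.2 hfs_ge
  have hFpos : 0 < F s := hK s hsI hfs
  have hslope : Tendsto (slope f s) (𝓝[≠] s) (𝓝 (F s)) :=
    hasDerivAt_iff_tendsto_slope.mp (hd s hsI)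
  have hslope' : Tendsto (slope f s) (𝓝[<] s) (𝓝 (F s)) :=
    hslope.mono_left (nhdsWithin_mono s (fun t ht => ne_of_lt ht))
  have hFle : F s ≤ 0 := by
    refine le_of_tendsto hslope' ?_
    filter_upwards [hev] with t ht
    have h1 : 0 ≤ f t - f s := by rw [hfs]; linarith [hlt t ht.1.le ht.2]
    have h2 : t - s ≤ 0 := by linarith [ht.2]
    rw [slope_def_field]
    exact div_nonpos_of_nonneg_of_nonpos h1 h2
  linarith

/-- Forward invariance downward. -/
lemma riccati_stay_below (f F : ℝ → ℝ) (a K : ℝ)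
    (hd : ∀ t ∈ Set.Ici a, HasDerivAt f (F t) t)
    (h0 : f a < K)
    (hK : ∀ t ∈ Set.Ici a, f t = K → F t < 0) :
    ∀ t ∈ Set.Ici a, f t < K := by
  have h := riccati_stay_above (fun t => -f t) (fun t => -F t) a (-K)
    (fun t ht => (hd t ht).neg) (by simpa using h0)
    (fun t ht hft => by
      have : f t = K := by linarith [neg_eq_iff_eq_neg.mp hft]
      simpa using hK t ht this)
  intro t ht
  have := h t ht
  simpa using this

/-- Linear lower bound from a derivative lower bound. -/
lemma riccati_linear_growth (f F : ℝ → ℝ) (a c : ℝ)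
    (hd : ∀ t ∈ Set.Ici a, HasDerivAt f (F t) t)
    (hc : ∀ t ∈ Set.Ici a, c ≤ F t) :
    ∀ t ∈ Set.Ici a, f a + c * (t - a) ≤ f t := by
  set g : ℝ → ℝ := fun t => f t - c * t with hg
  have hgd : ∀ t ∈ Set.Ici a, HasDerivAt g (F t - c) t := by
    intro t ht
    have h := (hd t ht).sub ((hasDerivAt_id t).const_mul c); simp only [mul_one] at h; rw [hg]; exact h
  have hmono : MonotoneOn g (Set.Ici a) := by
    refine monotoneOn_of_deriv_nonneg (convex_Ici a)
      (fun t ht => (hgd t ht).continuousAt.continuousWithinAt) ?_ ?_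
    · intro t ht
      rw [interior_Ici] at ht
      exact (hgd t (Set.mem_Ioi.mp ht).le).differentiableAt.differentiableWithinAt
    · intro t ht
      rw [interior_Ici] at ht
      rw [(hgd t (Set.mem_Ioi.mp ht).le).deriv]
      linarith [hc t (Set.mem_Ioi.mp ht).le]
  intro t ht
  have := hmono (self_mem_Ici) ht ht
  simp only [hg] at this
  nlinarith

set_option maxHeartbeats 1000000 in
/-- If `lam` is continuous with values in `[lmin, lmax]`, `0 < lmin ≤ lmax`,
and `lam(t) → λf` as `t → ∞`, then the bounded positive solution `ω` of `ω' = ω² − λ`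
satisfies `ω(t) → √λf`, and any solution `γ` of `γ' = λ − γ²` with `γ(0) > 0` also
satisfies `γ(t) → √λf`. -/
theorem riccati_limits (lam ω γ : ℝ → ℝ) (lmin lmax lf : ℝ)
    (hmin : 0 < lmin) (hminmax : lmin ≤ lmax)
    (hlam_cont : ContinuousOn lam (Set.Ici 0))
    (hlam_mem : ∀ t ∈ Set.Ici (0 : ℝ), lam t ∈ Set.Icc lmin lmax)
    (hlam_lim : Filter.Tendsto lam Filter.atTop (nhds lf))
    (hω_ode : ∀ t ∈ Set.Ici (0 : ℝ), HasDerivAt ω (ω t ^ 2 - lam t) t)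
    (hω_pos : ∀ t ∈ Set.Ici (0 : ℝ), 0 < ω t)
    (hω_bdd : ∃ M : ℝ, ∀ t ∈ Set.Ici (0 : ℝ), ω t ≤ M)
    (hγ_ode : ∀ t ∈ Set.Ici (0 : ℝ), HasDerivAt γ (lam t - γ t ^ 2) t)
    (hγ_init : 0 < γ 0) :
    Filter.Tendsto ω Filter.atTop (nhds (Real.sqrt lf)) ∧
    Filter.Tendsto γ Filter.atTop (nhds (Real.sqrt lf)) := by
  obtain ⟨M, hM⟩ := hω_bdd
  have hlf : lmin ≤ lf :=
    ge_of_tendsto hlam_lim (Filter.eventually_atTop.mpr ⟨0, fun t ht => (hlam_mem t ht).1⟩)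
  have hlf0 : 0 < lf := lt_of_lt_of_le hmin hlf
  -- choose ε for a given δ
  have heps : ∀ δ > (0:ℝ), ∃ ε > (0:ℝ), ε < lmin ∧
      Real.sqrt (lf + ε) < Real.sqrt lf + δ ∧ Real.sqrt lf - δ < Real.sqrt (lf - ε) := by
    intro δ hδ
    have hc : ContinuousAt Real.sqrt lf := Real.continuous_sqrt.continuousAt
    rw [Metric.continuousAt_iff] at hc
    obtain ⟨ε₀, hε₀, hcl⟩ := hc δ hδ
    refine ⟨min (ε₀/2) (lmin/2), by positivity, ?_, ?_, ?_⟩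
    · have := min_le_right (ε₀/2) (lmin/2); linarith
    · have h1 : dist (lf + min (ε₀/2) (lmin/2)) lf < ε₀ := by
        rw [Real.dist_eq, abs_lt]
        have h2 := min_le_left (ε₀/2) (lmin/2)
        have h3 : (0:ℝ) < min (ε₀/2) (lmin/2) := by positivity
        constructor <;> linarith
      have := hcl h1
      rw [Real.dist_eq, abs_lt] at this
      linarith [this.1]
    · have h1 : dist (lf - min (ε₀/2) (lmin/2)) lf < ε₀ := by
        rw [Real.dist_eq, abs_lt]
        have h2 := min_le_left (ε₀/2) (lmin/2)
        have h3 : (0:ℝ) < min (ε₀/2) (lmin/2) := by positivity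
        constructor <;> linarith
      have := hcl h1
      rw [Real.dist_eq, abs_lt] at this
      linarith [this.2]
  -- eventual bound on lam
  have hlamT : ∀ ε > (0:ℝ), ∃ T ≥ (0:ℝ), ∀ t, T ≤ t → lf - ε < lam t ∧ lam t < lf + ε := by
    intro ε hε
    obtain ⟨N, hN⟩ := Metric.tendsto_atTop.mp hlam_lim ε hε
    refine ⟨max N 0, le_max_right _ _, fun t ht => ?_⟩
    have := hN t (le_trans (le_max_left N 0) ht)
    rw [Real.dist_eq, abs_lt] at this
    constructor <;> linarith [this.1, this.2]
  -- ω band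
  have hband_ω : ∀ ε > (0:ℝ), ε < lmin → ∃ T ≥ (0:ℝ), ∀ t, T ≤ t →
      Real.sqrt (lf - ε) ≤ ω t ∧ ω t ≤ Real.sqrt (lf + ε) := by
    intro ε hε hεl
    obtain ⟨T, hT0, hlamb⟩ := hlamT ε hε
    refine ⟨T, hT0, ?_⟩
    have hup : ∀ t, T ≤ t → ω t ≤ Real.sqrt (lf + ε) := by
      by_contra h
      push_neg at h
      obtain ⟨t₀, ht₀, hgt⟩ := h
      set K := (ω t₀ + Real.sqrt (lf + ε)) / 2 with hKdef
      have hsq : Real.sqrt (lf + ε) < K := by rw [hKdef]; linarith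
      have hKlt : K < ω t₀ := by rw [hKdef]; linarith
      have hKpos : 0 < K := lt_of_le_of_lt (Real.sqrt_nonneg _) hsq
      have hK2 : lf + ε < K ^ 2 := (Real.sqrt_lt' hKpos).mp hsq
      have hd : ∀ t ∈ Set.Ici t₀, HasDerivAt ω (ω t ^ 2 - lam t) t :=
        fun t ht => hω_ode t (le_trans (le_trans hT0 ht₀) ht)
      have habove := riccati_stay_above ω (fun t => ω t ^ 2 - lam t) t₀ K hd hKlt
        (fun t ht heq => by
          rw [heq]
          have := (hlamb t (le_trans ht₀ ht)).2
          linarith)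
      set c := K ^ 2 - (lf + ε) with hcdef
      have hcpos : 0 < c := by rw [hcdef]; linarith
      have hgrow := riccati_linear_growth ω (fun t => ω t ^ 2 - lam t) t₀ c hd
        (fun t ht => by
          have h1 := habove t ht
          have h2 := (hlamb t (le_trans ht₀ ht)).2
          rw [hcdef]
          nlinarith)
      set t₁ := max t₀ (t₀ + (M + 1 - ω t₀) / c) with ht₁def
      have h1 : t₀ ≤ t₁ := le_max_left _ _
      have h2 := hgrow t₁ h1
      have h3 : (M + 1 - ω t₀) / c ≤ t₁ - t₀ := by
        have := le_max_right t₀ (t₀ + (M + 1 - ω t₀) / c)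
        rw [ht₁def]; linarith
      have h4 : M + 1 - ω t₀ ≤ c * (t₁ - t₀) := by
        rw [div_le_iff₀ hcpos] at h3
        linarith [h3]
      have h5 := hM t₁ (le_trans (le_trans hT0 ht₀) h1)
      linarith
    have hlo : ∀ t, T ≤ t → Real.sqrt (lf - ε) ≤ ω t := by
      by_contra h
      push_neg at h
      obtain ⟨t₀, ht₀, hltω⟩ := h
      have hωpos0 : 0 < ω t₀ := hω_pos t₀ (le_trans hT0 ht₀)
      set K := (ω t₀ + Real.sqrt (lf - ε)) / 2 with hKdef
      have hKgt : ω t₀ < K := by rw [hKdef]; linarith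
      have hKlt : K < Real.sqrt (lf - ε) := by rw [hKdef]; linarith
      have hKpos : 0 < K := by rw [hKdef]; positivity
      have hK2 : K ^ 2 < lf - ε := (Real.lt_sqrt hKpos.le).mp hKlt
      have hd : ∀ t ∈ Set.Ici t₀, HasDerivAt ω (ω t ^ 2 - lam t) t :=
        fun t ht => hω_ode t (le_trans (le_trans hT0 ht₀) ht)
      have hbelow := riccati_stay_below ω (fun t => ω t ^ 2 - lam t) t₀ K hd hKgt
        (fun t ht heq => by
          rw [heq]
          have := (hlamb t (le_trans ht₀ ht)).1
          linarith)
      set c := (lf - ε) - K ^ 2 with hcdef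
      have hcpos : 0 < c := by rw [hcdef]; linarith
      have hgrow := riccati_linear_growth (fun t => -ω t) (fun t => -(ω t ^ 2 - lam t)) t₀ c
        (fun t ht => (hd t ht).neg)
        (fun t ht => by
          have h1 := hbelow t ht
          have h2 := (hlamb t (le_trans ht₀ ht)).1
          have h3 := hω_pos t (le_trans (le_trans hT0 ht₀) ht)
          rw [hcdef]
          nlinarith)
      set t₁ := max t₀ (t₀ + (ω t₀) / c + 1) with ht₁def
      have h1 : t₀ ≤ t₁ := le_max_left _ _
      have h2 := hgrow t₁ h1
      have h3 : (ω t₀) / c + 1 ≤ t₁ - t₀ := by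
        have := le_max_right t₀ (t₀ + (ω t₀) / c + 1)
        rw [ht₁def]; linarith
      have h4 : ω t₀ + c ≤ c * (t₁ - t₀) := by
        have h5 : (ω t₀) / c ≤ t₁ - t₀ - 1 := by linarith
        rw [div_le_iff₀ hcpos] at h5
        nlinarith
      have h6 := hω_pos t₁ (le_trans (le_trans hT0 ht₀) h1)
      linarith
    exact fun t ht => ⟨hlo t ht, hup t ht⟩
  -- γ positivity
  set K₀ := min (γ 0) (Real.sqrt lmin) / 2 with hK₀def
  have hK₀pos : 0 < K₀ := by
    rw [hK₀def]
    have := Real.sqrt_pos.mpr hmin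
    positivity
  have hK₀lt : K₀ < γ 0 := by
    rw [hK₀def]
    have h1 := min_le_left (γ 0) (Real.sqrt lmin)
    linarith [lt_min hγ_init (Real.sqrt_pos.mpr hmin)]
  have hK₀sq : K₀ ^ 2 < lmin := by
    have h1 : K₀ < Real.sqrt lmin := by
      rw [hK₀def]
      have := min_le_right (γ 0) (Real.sqrt lmin)
      have := Real.sqrt_pos.mpr hmin
      linarith
    exact (Real.lt_sqrt hK₀pos.le).mp h1
  have hγpos : ∀ t ∈ Set.Ici (0:ℝ), K₀ < γ t :=
    riccati_stay_above γ (fun t => lam t - γ t ^ 2) 0 K₀ hγ_ode hK₀lt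
      (fun t ht heq => by
        rw [heq]
        have := (hlam_mem t ht).1
        linarith)
  -- γ band
  have hband_γ : ∀ ε > (0:ℝ), ε < lmin → ∀ δ > (0:ℝ), ∃ T ≥ (0:ℝ), ∀ t, T ≤ t →
      Real.sqrt (lf - ε) - δ < γ t ∧ γ t < Real.sqrt (lf + ε) + δ := by
    intro ε hε hεl δ hδ
    obtain ⟨T, hT0, hlamb⟩ := hlamT ε hε
    -- upper part
    have hupex : ∃ t₁ ≥ T, γ t₁ < Real.sqrt (lf + ε) + δ := by
      by_contra h
      push_neg at h
      set B := Real.sqrt (lf + ε) + δ with hBdef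
      have hBpos : 0 < B := by rw [hBdef]; positivity
      have hB2 : lf + ε < B ^ 2 := by
        refine (Real.sqrt_lt' hBpos).mp ?_
        rw [hBdef]; linarith
      set c := B ^ 2 - (lf + ε) with hcdef
      have hcpos : 0 < c := by rw [hcdef]; linarith
      have hd : ∀ t ∈ Set.Ici T, HasDerivAt γ (lam t - γ t ^ 2) t :=
        fun t ht => hγ_ode t (le_trans hT0 ht)
      have hgrow := riccati_linear_growth (fun t => -γ t) (fun t => -(lam t - γ t ^ 2)) T c
        (fun t ht => (hd t ht).neg)
        (fun t ht => by
          have h1 := h t ht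
          have h2 := (hlamb t ht).2
          rw [hcdef]
          nlinarith)
      set t₁ := max T (T + (γ T + 1) / c) with ht₁def
      have h1 : T ≤ t₁ := le_max_left _ _
      have h2 := hgrow t₁ h1
      have h3 : (γ T + 1) / c ≤ t₁ - T := by
        have := le_max_right T (T + (γ T + 1) / c)
        rw [ht₁def]; linarith
      have h4 : γ T + 1 ≤ c * (t₁ - T) := by
        rw [div_le_iff₀ hcpos] at h3
        linarith
      have h5 := hγpos t₁ (le_trans hT0 h1)
      linarith
    obtain ⟨t₁, ht₁T, ht₁⟩ := hupex
    have hup : ∀ t, t₁ ≤ t → γ t < Real.sqrt (lf + ε) + δ := by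
      have hd : ∀ t ∈ Set.Ici t₁, HasDerivAt γ (lam t - γ t ^ 2) t :=
        fun t ht => hγ_ode t (le_trans (le_trans hT0 ht₁T) ht)
      have hBpos : (0:ℝ) < Real.sqrt (lf + ε) + δ := by positivity
      have hB2 : lf + ε < (Real.sqrt (lf + ε) + δ) ^ 2 := by
        refine (Real.sqrt_lt' hBpos).mp ?_
        linarith
      exact fun t ht => riccati_stay_below γ (fun t => lam t - γ t ^ 2) t₁
        (Real.sqrt (lf + ε) + δ) hd ht₁
        (fun t ht heq => by
          rw [heq]
          have := (hlamb t (le_trans ht₁T ht)).2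
          linarith) t ht
    -- lower part
    set L := Real.sqrt (lf - ε) with hLdef
    have hL2 : L ^ 2 = lf - ε := Real.sq_sqrt (by linarith)
    by_cases hcase : L - δ ≤ K₀
    · refine ⟨t₁, le_trans hT0 ht₁T, fun t ht => ⟨?_, hup t ht⟩⟩
      have := hγpos t (le_trans (le_trans hT0 ht₁T) ht)
      linarith
    · push_neg at hcase
      have hLδpos : 0 < L - δ := lt_trans hK₀pos hcase
      have hloex : ∃ t₂ ≥ t₁, L - δ / 2 < γ t₂ := by
        by_contra h
        push_neg at h
        set B := L - δ / 2 with hBdef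
        have hBpos : 0 < B := by rw [hBdef]; linarith
        set c := L ^ 2 - B ^ 2 with hcdef
        have hcpos : 0 < c := by
          rw [hcdef, hBdef]
          nlinarith [Real.sqrt_nonneg (lf - ε)]
        have hd : ∀ t ∈ Set.Ici t₁, HasDerivAt γ (lam t - γ t ^ 2) t :=
          fun t ht => hγ_ode t (le_trans (le_trans hT0 ht₁T) ht)
        have hgrow := riccati_linear_growth γ (fun t => lam t - γ t ^ 2) t₁ c hd
          (fun t ht => by
            have h1 := h t ht
            have h2 := (hlamb t (le_trans ht₁T ht)).1
            have h3 := hγpos t (le_trans (le_trans hT0 ht₁T) ht)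
            rw [hcdef, hL2]
            nlinarith)
        set t₂ := max t₁ (t₁ + (B - γ t₁ + 1) / c) with ht₂def
        have h1 : t₁ ≤ t₂ := le_max_left _ _
        have h2 := hgrow t₂ h1
        have h3 : (B - γ t₁ + 1) / c ≤ t₂ - t₁ := by
          have := le_max_right t₁ (t₁ + (B - γ t₁ + 1) / c)
          rw [ht₂def]; linarith
        have h4 : B - γ t₁ + 1 ≤ c * (t₂ - t₁) := by
          rw [div_le_iff₀ hcpos] at h3
          linarith
        have h5 := h t₂ h1
        linarith
      obtain ⟨t₂, ht₂₁, ht₂⟩ := hloex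
      have hd : ∀ t ∈ Set.Ici t₂, HasDerivAt γ (lam t - γ t ^ 2) t :=
        fun t ht => hγ_ode t (le_trans (le_trans hT0 (le_trans ht₁T ht₂₁)) ht)
      have hK2 : (L - δ) ^ 2 < lf - ε := by
        rw [← hL2]
        nlinarith [Real.sqrt_nonneg (lf - ε)]
      have hlo := riccati_stay_above γ (fun t => lam t - γ t ^ 2) t₂ (L - δ) hd
        (by linarith)
        (fun t ht heq => by
          rw [heq]
          have := (hlamb t (le_trans ht₁T (le_trans ht₂₁ ht))).1
          linarith)
      refine ⟨t₂, le_trans hT0 (le_trans ht₁T ht₂₁), fun t ht => ⟨hlo t ht, hup t (le_trans ht₂₁ ht)⟩⟩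
  -- conclude
  constructor
  · rw [Metric.tendsto_atTop]
    intro δ hδ
    obtain ⟨ε, hε, hεl, hs1, hs2⟩ := heps δ hδ
    obtain ⟨T, hT0, hband⟩ := hband_ω ε hε hεl
    refine ⟨T, fun t ht => ?_⟩
    have := hband t ht
    rw [Real.dist_eq, abs_lt]
    constructor <;> linarith [this.1, this.2]
  · rw [Metric.tendsto_atTop]
    intro δ hδ
    obtain ⟨ε, hε, hεl, hs1, hs2⟩ := heps (δ/2) (by linarith)
    obtain ⟨T, hT0, hband⟩ := hband_γ ε hε hεl (δ/2) (by linarith)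
    refine ⟨T, fun t ht => ?_⟩
    have := hband t ht
    rw [Real.dist_eq, abs_lt]
    constructor <;> linarith [this.1, this.2]
end

section
/- Suppose c : [0,∞) → ℝ³ is twice differentiable and satisfies c̈ = λ(t)(c − r) + g for a fixed constant r ∈ ℝ³ and a scalar function λ. Then the Gram determinant G(t) = ((c(t) − r) × ċ(t)) · g is constant in time. -/
/-! By the product rule, `G' = (ċ × ċ + (c − r) × c̈) · g`. The first cross product vanishes, and
since `c̈ − g = λ (c − r)` is parallel to `c − r` the second is `(c − r) × g`, which is orthogonal
to `g`. So `G' = 0`. -/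

open Matrix

section
variable {𝕜 : Type*} [NontriviallyNormedField 𝕜] [CompleteSpace 𝕜]
  {u v : 𝕜 → Fin 3 → 𝕜} {u' v' : Fin 3 → 𝕜} {x : 𝕜}

theorem HasDerivAt.crossProduct (hu : HasDerivAt u u' x) (hv : HasDerivAt v v' x) :
    HasDerivAt (fun t ↦ u t ⨯₃ v t) (u x ⨯₃ v' + u' ⨯₃ v x) x := by
  simpa using (LinearMap.toContinuousBilinearMap _root_.crossProduct).hasDerivAt_of_bilinear
    (fun _ ↦ hu) (fun _ ↦ hv)

theorem HasDerivAt.dotProduct (hu : HasDerivAt u u' x) (hv : HasDerivAt v v' x) :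
    HasDerivAt (fun t ↦ u t ⬝ᵥ v t) (u x ⬝ᵥ v' + u' ⬝ᵥ v x) x := by
  simpa using (LinearMap.toContinuousBilinearMap (dotProductBilin 𝕜 𝕜)).hasDerivAt_of_bilinear
    (fun _ ↦ hu) (fun _ ↦ hv)
end

theorem cross_smul_add_dot_eq_zero {R : Type*} [CommRing R] (a : R) (p g : Fin 3 → R) :
    p ⨯₃ (a • p + g) ⬝ᵥ g = 0 := by
  rw [map_add, map_smul, cross_self, smul_zero, zero_add, dotProduct_comm, dot_cross_self]

/-- For the variable-height inverted pendulum with a stationary CoP `r`,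
i.e. `c̈ = λ(t)(c − r) + g`, the Gram determinant `G(t) = ((c(t) − r) × ċ(t)) · g` is
constant in time. -/
theorem fixed_cop_gram_invariant (lam : ℝ → ℝ) (r g : Fin 3 → ℝ)
    (c c' : ℝ → (Fin 3 → ℝ))
    (hc : ∀ t : ℝ, HasDerivAt c (c' t) t)
    (hc' : ∀ t : ℝ, HasDerivAt c' (lam t • (c t - r) + g) t) :
    ∀ s t : ℝ, (crossProduct (c s - r) (c' s)) ⬝ᵥ g
      = (crossProduct (c t - r) (c' t)) ⬝ᵥ g := by
  have hG (t : ℝ) : HasDerivAt (fun t ↦ (c t - r) ⨯₃ c' t ⬝ᵥ g) 0 t :=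
    ((((hc t).sub_const r).crossProduct (hc' t)).dotProduct (hasDerivAt_const t g)).congr_deriv
      (by rw [dotProduct_zero, zero_add, cross_self, add_zero, cross_smul_add_dot_eq_zero])
  exact is_const_of_deriv_eq_zero (fun t ↦ (hG t).differentiableAt) (fun t ↦ (hG t).deriv)
end

section
/- Consider the linear ODE s̈(t) = λ_j s(t) with λ_j > 0 on an interval starting at t_{j+1}, with s(t_{j+1}) = s_{j+1} > 0 and ṡ(t_{j+1}) = −ω_{j+1} s_{j+1} where ω_{j+1} > 0; suppose also ω_{j+1} > √λ_j or the trajectory remains positive. Then the time t_j at which s(t) first equals a given value s_j ∈ (0, s_{j+1}) with ṡ(t_j) = −ω_j s_j, where s_j ω_j = √φ_j, satisfies t_j − t_{j+1} = (1/√λ_j) log((√φ_{j+1} + √λ_j s_{j+1})/(√φ_j + √λ_j s_j)), where φ_k = s_k² ω_k². -/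
/-- Backward time-recursion formula of the capture problem solver. On an
interval where the stiffness is the constant `λⱼ > 0`, the solution of `s̈ = λⱼ s` with
`s(t_{j+1}) = s_{j+1} > 0`, `ṡ(t_{j+1}) = −ω_{j+1} s_{j+1}` (`ω_{j+1} > 0`), remaining
positive, first reaches the value `sⱼ ∈ (0, s_{j+1})` with slope `ṡ(tⱼ) = −ωⱼ sⱼ`
(`ωⱼ > 0`) at the time `tⱼ` given by
`tⱼ − t_{j+1} = (1/√λⱼ) log((√φ_{j+1} + √λⱼ s_{j+1})/(√φⱼ + √λⱼ sⱼ))`,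
where `φₖ = sₖ² ωₖ²`. -/
theorem time_mapping_formula (lamj : ℝ) (hlam : 0 < lamj)
    (tj1 tj sj1 sj ωj1 ωj : ℝ)
    (hsj1 : 0 < sj1) (hsj : 0 < sj) (hss : sj < sj1)
    (hωj1 : 0 < ωj1) (hωj : 0 < ωj) (htt : tj1 < tj)
    (s s' : ℝ → ℝ)
    (hds : ∀ t ∈ Set.Icc tj1 tj, HasDerivAt s (s' t) t)
    (hdds : ∀ t ∈ Set.Icc tj1 tj, HasDerivAt s' (lamj * s t) t)
    (hinit : s tj1 = sj1) (hinit' : s' tj1 = -ωj1 * sj1)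
    (hpos : ∀ t ∈ Set.Icc tj1 tj, 0 < s t)
    (hend : s tj = sj) (hend' : s' tj = -ωj * sj)
    (hfirst : ∀ t ∈ Set.Ico tj1 tj, sj < s t) :
    tj - tj1 = (1 / Real.sqrt lamj) *
      Real.log ((Real.sqrt (sj1 ^ 2 * ωj1 ^ 2) + Real.sqrt lamj * sj1)
              / (Real.sqrt (sj ^ 2 * ωj ^ 2) + Real.sqrt lamj * sj)) := by
  set c := Real.sqrt lamj with hcdef
  have hc : 0 < c := Real.sqrt_pos.mpr hlam
  have hcc : c * c = lamj := Real.mul_self_sqrt hlam.le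
  -- h t = (c * s t - s' t) * exp (c * t) has zero derivative on [tj1, tj]
  set h : ℝ → ℝ := fun t => (c * s t - s' t) * Real.exp (c * t) with hhdef
  have hderiv : ∀ t ∈ Set.Icc tj1 tj, HasDerivAt h 0 t := by
    intro t ht
    have h1 : HasDerivAt (fun t => c * s t - s' t) (c * s' t - lamj * s t) t :=
      ((hds t ht).const_mul c).sub (hdds t ht)
    have h2 : HasDerivAt (fun t => Real.exp (c * t)) (c * Real.exp (c * t)) t := by
      have := ((hasDerivAt_id t).const_mul c).exp
      simpa [mul_comm] using this
    have := h1.mul h2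
    refine this.congr_deriv ?_
    rw [← hcc]; ring
  have hcont : ContinuousOn h (Set.Icc tj1 tj) := fun t ht =>
    (hderiv t ht).continuousAt.continuousWithinAt
  have hconst : h tj = h tj1 := by
    have := constant_of_has_deriv_right_zero hcont
      (fun t ht => ((hderiv t (Set.mem_Icc_of_Ico ht)).hasDerivWithinAt))
    exact this tj (Set.mem_Icc.mpr ⟨htt.le, le_refl _⟩)
  -- unpack the constancy relation
  have key : (c * sj + ωj * sj) * Real.exp (c * tj)
      = (c * sj1 + ωj1 * sj1) * Real.exp (c * tj1) := by
    have := hconst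
    simp only [hhdef, hend, hend', hinit, hinit'] at this
    linarith [this]
  have hA : 0 < sj1 * ωj1 + c * sj1 := by positivity
  have hB : 0 < sj * ωj + c * sj := by positivity
  have hsqrt1 : Real.sqrt (sj1 ^ 2 * ωj1 ^ 2) = sj1 * ωj1 := by
    rw [← mul_pow, Real.sqrt_sq (by positivity)]
  have hsqrt2 : Real.sqrt (sj ^ 2 * ωj ^ 2) = sj * ωj := by
    rw [← mul_pow, Real.sqrt_sq (by positivity)]
  rw [hsqrt1, hsqrt2]
  have hexp : Real.exp (c * (tj - tj1)) = (sj1 * ωj1 + c * sj1) / (sj * ωj + c * sj) := by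
    rw [eq_div_iff hB.ne']
    rw [mul_sub, Real.exp_sub, div_mul_eq_mul_div, div_eq_iff (Real.exp_pos _).ne']
    linear_combination key
  have := congrArg Real.log hexp
  rw [Real.log_exp] at this
  field_simp
  rw [show sj1 * (ωj1 + c) / (sj * (ωj + c)) = (sj1 * ωj1 + c * sj1) / (sj * ωj + c * sj) by ring]
  linarith [this]
end

section
/- Let l, u ∈ ℝⁿ with l ≤ u componentwise, and let Z = {φ ∈ ℝⁿ : l ≤ C_Z φ ≤ u} where C_Z is the lower bidiagonal matrix with 1 on the diagonal and −1 on the subdiagonal. For a ∈ [0,1], define φ_i(a) = L l + a L(u − l), with L = C_Z^{−1} the all-ones lower triangular matrix. Then φ_i(a) ∈ Z for all a ∈ [0,1], the last component satisfies φ_{i,n}(a) = Σ_j l_j + a Σ_j (u_j − l_j), and for bounds 0 ≤ m ≤ M: the set {φ ∈ Z : m ≤ φ_n ≤ M} is nonempty if and only if [a⁻, a⁺] ∩ [0,1] ≠ ∅, where a⁻, a⁺ are the values with φ_{i,n}(a⁻) = m and φ_{i,n}(a⁺) = M (assuming Σ_j(u_j−l_j) > 0). -/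
/-!
The difference matrix `C_Z` is inverted by the cumulative-sum matrix `L` on both sides, so
`φ ↦ C_Z φ` identifies `Z` with the box `[l, u]`, and the last coordinate `φₙ = (L C_Z φ)ₙ` is the
sum of the coordinates of `C_Z φ`. Hence `φₙ` ranges over `[Σ l, Σ u]` on `Z`, and this range is
swept out exactly by the segment `a ↦ L l + a L(u − l)`, `a ∈ [0,1]`, whose last coordinate is
affine in `a`. The feasibility question thus reduces to intersecting two intervals of parameters.
-/

open Matrix

def cumsumMatrix (ι R : Type*) [Zero R] [One R] [LE ι] [DecidableLE ι] : Matrix ι ι R :=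
  of fun i j => if j ≤ i then 1 else 0

def diffMatrix (k : ℕ) (R : Type*) [Zero R] [One R] [Neg R] : Matrix (Fin k) (Fin k) R :=
  of fun i j => if i = j then 1 else if (j : ℕ) + 1 = (i : ℕ) then -1 else 0

theorem cumsumMatrix_mulVec_apply {ι R : Type*} [Fintype ι] [LinearOrder ι]
    [LocallyFiniteOrderBot ι] [NonAssocSemiring R] (v : ι → R) (i : ι) :
    (cumsumMatrix ι R *ᵥ v) i = ∑ j ∈ Finset.Iic i, v j := by
  simp [cumsumMatrix, mulVec, dotProduct, ite_mul, Finset.sum_ite, Finset.filter_ge_eq_Iic]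

section

variable {n : ℕ} {R : Type*}

theorem Fin.Iic_succ (i : Fin n) : Finset.Iic i.succ = insert i.succ (Finset.Iic i.castSucc) := by
  ext j
  simp [Fin.le_iff_val_le_val, Fin.ext_iff]
  omega

theorem cumsumMatrix_mulVec_last [NonAssocSemiring R] (v : Fin (n + 1) → R) :
    (cumsumMatrix (Fin (n + 1)) R *ᵥ v) (Fin.last n) = ∑ j, v j := by
  rw [cumsumMatrix_mulVec_apply, ← Fin.top_eq_last, Finset.Iic_top]

variable [Ring R]

theorem diffMatrix_mulVec_zero (w : Fin (n + 1) → R) : (diffMatrix (n + 1) R *ᵥ w) 0 = w 0 := by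
  simp [diffMatrix, mulVec, dotProduct, ite_mul, eq_comm]

theorem diffMatrix_succ (i : Fin n) :
    diffMatrix (n + 1) R i.succ = Pi.single i.succ 1 - Pi.single i.castSucc 1 := by
  ext j
  rcases eq_or_ne j i.succ with rfl | hj
  · simp [diffMatrix, Fin.ext_iff]
  · simp [diffMatrix, hj, Pi.single_apply, Fin.ext_iff]
    split_ifs <;> simp_all [Fin.ext_iff]

theorem diffMatrix_mulVec_succ (w : Fin (n + 1) → R) (i : Fin n) :
    (diffMatrix (n + 1) R *ᵥ w) i.succ = w i.succ - w i.castSucc := by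
  rw [mulVec, diffMatrix_succ, sub_dotProduct, single_one_dotProduct, single_one_dotProduct]

theorem diffMatrix_mulVec_cumsumMatrix_mulVec (v : Fin (n + 1) → R) :
    diffMatrix (n + 1) R *ᵥ (cumsumMatrix (Fin (n + 1)) R *ᵥ v) = v := by
  funext i
  induction i using Fin.cases with
  | zero =>
    rw [diffMatrix_mulVec_zero, cumsumMatrix_mulVec_apply, ← bot_eq_zero, Finset.Iic_bot,
      Finset.sum_singleton]
  | succ i =>
    rw [diffMatrix_mulVec_succ, cumsumMatrix_mulVec_apply, cumsumMatrix_mulVec_apply, Fin.Iic_succ,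
      Finset.sum_insert (by simp [Fin.le_iff_val_le_val]), add_sub_cancel_right]

theorem diffMatrix_mul_cumsumMatrix : diffMatrix (n + 1) R * cumsumMatrix (Fin (n + 1)) R = 1 :=
  ext_iff_mulVec.2 fun v => by rw [← mulVec_mulVec, diffMatrix_mulVec_cumsumMatrix_mulVec, one_mulVec]

end

section

variable {n : ℕ} {R : Type*} [CommRing R]

theorem cumsumMatrix_mul_diffMatrix : cumsumMatrix (Fin (n + 1)) R * diffMatrix (n + 1) R = 1 :=
  mul_eq_one_comm.1 diffMatrix_mul_cumsumMatrix

theorem sum_diffMatrix_mulVec (φ : Fin (n + 1) → R) :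
    ∑ i, (diffMatrix (n + 1) R *ᵥ φ) i = φ (Fin.last n) := by
  rw [← cumsumMatrix_mulVec_last, mulVec_mulVec, cumsumMatrix_mul_diffMatrix, one_mulVec]

end

theorem last_mem_Icc_sum_of_diffMatrix_mulVec_mem_Icc {n : ℕ} {R : Type*} [CommRing R]
    [PartialOrder R] [IsOrderedAddMonoid R] {l u φ : Fin (n + 1) → R}
    (hφ : diffMatrix (n + 1) R *ᵥ φ ∈ Set.Icc l u) :
    φ (Fin.last n) ∈ Set.Icc (∑ j, l j) (∑ j, u j) := by
  rw [← sum_diffMatrix_mulVec φ]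
  exact ⟨Finset.sum_le_sum fun i _ => hφ.1 i, Finset.sum_le_sum fun i _ => hφ.2 i⟩

theorem add_mul_mem_Icc_iff {K : Type*} [Field K] [LinearOrder K] [IsStrictOrderedRing K]
    {a c d m M : K} (hd : 0 < d) :
    c + a * d ∈ Set.Icc m M ↔ a ∈ Set.Icc ((m - c) / d) ((M - c) / d) := by
  simp only [Set.mem_Icc, div_le_iff₀ hd, le_div_iff₀ hd]
  constructor <;> rintro ⟨h₁, h₂⟩ <;> constructor <;> linarith

theorem capture_zonotope_feasibility_general (n : ℕ)
    (C L : Matrix (Fin (n + 1)) (Fin (n + 1)) ℝ)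
    (hC : ∀ i j : Fin (n + 1), C i j =
      if i = j then 1 else if (j : ℕ) + 1 = (i : ℕ) then -1 else 0)
    (hL : ∀ i j : Fin (n + 1), L i j = if j ≤ i then 1 else 0)
    (l u : Fin (n + 1) → ℝ) (hlu : l ≤ u)
    (φi : ℝ → (Fin (n + 1) → ℝ))
    (hφi : ∀ a : ℝ, φi a = L.mulVec l + a • L.mulVec (u - l))
    (m M : ℝ)
    (hd : 0 < ∑ j, (u j - l j))
    (am ap : ℝ)
    (ham : am = (m - ∑ j, l j) / ∑ j, (u j - l j))
    (hap : ap = (M - ∑ j, l j) / ∑ j, (u j - l j)) :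
    (∀ a ∈ Set.Icc (0:ℝ) 1, l ≤ C.mulVec (φi a) ∧ C.mulVec (φi a) ≤ u) ∧
    (∀ a : ℝ, φi a (Fin.last n) = (∑ j, l j) + a * ∑ j, (u j - l j)) ∧
    ((∃ φ : Fin (n + 1) → ℝ, (l ≤ C.mulVec φ ∧ C.mulVec φ ≤ u) ∧
        m ≤ φ (Fin.last n) ∧ φ (Fin.last n) ≤ M) ↔
      (Set.Icc am ap ∩ Set.Icc (0:ℝ) 1).Nonempty) := by
  obtain rfl : C = diffMatrix (n + 1) ℝ := ext hC
  obtain rfl : L = cumsumMatrix (Fin (n + 1)) ℝ := ext hL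
  have segment_mem (a : ℝ) (ha : a ∈ Set.Icc (0:ℝ) 1) :
      diffMatrix (n + 1) ℝ *ᵥ φi a ∈ Set.Icc l u := by
    rw [hφi, mulVec_add, mulVec_smul, diffMatrix_mulVec_cumsumMatrix_mulVec,
      diffMatrix_mulVec_cumsumMatrix_mulVec]
    exact segment_subset_Icc hlu (segment_eq_image' ℝ l u ▸ Set.mem_image_of_mem _ ha)
  have segment_last (a : ℝ) : φi a (Fin.last n) = (∑ j, l j) + a * ∑ j, (u j - l j) := by
    simp only [hφi, Pi.add_apply, Pi.smul_apply, smul_eq_mul, cumsumMatrix_mulVec_last,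
      Pi.sub_apply]
  refine ⟨segment_mem, segment_last, ⟨?_, ?_⟩⟩
  · rintro ⟨φ, hφ, hmφ, hφM⟩
    set a := (φ (Fin.last n) - ∑ j, l j) / ∑ j, (u j - l j)
    have hφa : φ (Fin.last n) = (∑ j, l j) + a * ∑ j, (u j - l j) := by
      rw [div_mul_cancel₀ _ hd.ne', add_sub_cancel]
    have h01 := (add_mul_mem_Icc_iff hd).1
      (hφa ▸ last_mem_Icc_sum_of_diffMatrix_mulVec_mem_Icc hφ)
    rw [sub_self, zero_div, ← Finset.sum_sub_distrib, div_self hd.ne'] at h01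
    exact ⟨a, ham ▸ hap ▸ (add_mul_mem_Icc_iff hd).1 (hφa ▸ ⟨hmφ, hφM⟩), h01⟩
  · rintro ⟨a, ha, ha01⟩
    refine ⟨φi a, segment_mem a ha01, ?_⟩
    rw [segment_last]
    exact (add_mul_mem_Icc_iff hd).2 (ham ▸ hap ▸ ha)

/-- Feasibility test for the capture problem zonotope
`Z = {φ : l ≤ C_Z φ ≤ u}`. The segment `φᵢ(a) = L l + a L(u − l)` (with `L = C_Z⁻¹` the
all-ones lower triangular matrix) lies in `Z` for `a ∈ [0,1]`, its last component is
`Σⱼ lⱼ + a Σⱼ (uⱼ − lⱼ)`, and for bounds `0 ≤ m ≤ M`, `{φ ∈ Z : m ≤ φₙ ≤ M}` is nonempty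
iff `[a⁻, a⁺] ∩ [0,1] ≠ ∅`, where `φᵢ,ₙ(a⁻) = m`, `φᵢ,ₙ(a⁺) = M` (given
`Σⱼ(uⱼ − lⱼ) > 0`). -/
theorem capture_zonotope_feasibility (n : ℕ)
    (C L : Matrix (Fin (n + 1)) (Fin (n + 1)) ℝ)
    (hC : ∀ i j : Fin (n + 1), C i j =
      if i = j then 1 else if (j : ℕ) + 1 = (i : ℕ) then -1 else 0)
    (hL : ∀ i j : Fin (n + 1), L i j = if j ≤ i then 1 else 0)
    (l u : Fin (n + 1) → ℝ) (hlu : l ≤ u)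
    (φi : ℝ → (Fin (n + 1) → ℝ))
    (hφi : ∀ a : ℝ, φi a = L.mulVec l + a • L.mulVec (u - l))
    (m M : ℝ) (hm : 0 ≤ m) (hmM : m ≤ M)
    (hd : 0 < ∑ j, (u j - l j))
    (am ap : ℝ)
    (ham : am = (m - ∑ j, l j) / ∑ j, (u j - l j))
    (hap : ap = (M - ∑ j, l j) / ∑ j, (u j - l j)) :
    (∀ a ∈ Set.Icc (0:ℝ) 1, l ≤ C.mulVec (φi a) ∧ C.mulVec (φi a) ≤ u) ∧
    (∀ a : ℝ, φi a (Fin.last n) = (∑ j, l j) + a * ∑ j, (u j - l j)) ∧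
    ((∃ φ : Fin (n + 1) → ℝ, (l ≤ C.mulVec φ ∧ C.mulVec φ ≤ u) ∧
        m ≤ φ (Fin.last n) ∧ φ (Fin.last n) ≤ M) ↔
      (Set.Icc am ap ∩ Set.Icc (0:ℝ) 1).Nonempty) :=
  capture_zonotope_feasibility_general n C L hC hL l u hlu φi hφi m M hd am ap ham hap
end
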